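/- arXiv:1408.5096 — 4 statements merged into one kernel-verified Lean document; each statement's English description precedes it below -/
import Mathlib

section
/- Let g : ℕ → ℝ be a nonnegative nonincreasing function with g extended so that g(0)=0, and let m, n be positive integers with n ≤ m. Define σ(ε) = max{ |supp(f)| : f ∈ ℕ^n, ∑_d f_d ≤ m, ∑_{d ∈ supp(f)} g(f_d) ≤ ε⁻¹ g(1) }, where supp(f) = {d : f_d ≠ 0}. Then for all 0 < α < ε, we have ε·(1 + σ(ε)) ≥ α·σ(α). -/
/-!
Take a vector `f` attaining `σ(α)`, with support `S` of size `k`. Keeping only the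
`t = ⌊k α / ε⌋` coordinates of `S` with the smallest `g`-values gives a vector whose `g`-sum is
at most `t / k` times that of `f`, hence at most `(t / k) α⁻¹ g(1) ≤ ε⁻¹ g(1)`. So
`σ(ε) ≥ t > k α / ε - 1`.
-/

/-- The maximum support size of a nonnegative integer frequency vector with
`L¹` norm at most `m` whose `g`-sum over its support is at most `ε⁻¹ * g 1`. -/
noncomputable def sigma (g : ℕ → ℝ) (ε : ℝ) (m n : ℕ) : ℕ :=
  sSup {k : ℕ | ∃ f : Fin n → ℕ, (∑ d, f d) ≤ m ∧
    (∑ d ∈ Finset.univ.filter (fun d => f d ≠ 0), g (f d)) ≤ ε⁻¹ * g 1 ∧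
    k = (Finset.univ.filter (fun d => f d ≠ 0)).card}

open Finset

theorem Finset.exists_subset_card_eq_card_mul_sum_le {ι : Type*} (w : ι → ℝ) (S : Finset ι)
    {t : ℕ} (ht : t ≤ #S) :
    ∃ T ⊆ S, #T = t ∧ (#S : ℝ) * ∑ i ∈ T, w i ≤ t * ∑ i ∈ S, w i := by
  classical
  induction t with
  | zero => exact ⟨∅, empty_subset S, rfl, by simp⟩
  | succ t ih =>
    obtain ⟨T, hTS, rfl, hT⟩ := ih (Nat.le_of_succ_le ht)
    have hcard : #(S \ T) = #S - #T := card_sdiff_of_subset hTS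
    obtain ⟨b, hb, hmin⟩ := (S \ T).exists_min_image w (card_pos.mp (by omega))
    have hbT : b ∉ T := (mem_sdiff.mp hb).2
    -- `w b` is at most the average of `w` over the complement `S \ T`
    have hb_avg : ((#S : ℝ) - #T) * w b ≤ ∑ i ∈ S, w i - ∑ i ∈ T, w i := by
      have := card_nsmul_le_sum (S \ T) w (w b) hmin
      rw [nsmul_eq_mul, hcard, Nat.cast_sub (card_le_card hTS), sum_sdiff_eq_sub hTS] at this
      exact this
    refine ⟨insert b T, insert_subset (mem_sdiff.mp hb).1 hTS, card_insert_of_notMem hbT, ?_⟩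
    rw [sum_insert hbT]
    have hgap : (1 : ℝ) ≤ #S - #T := by
      have : #T + 1 ≤ #S := ht
      rw [le_sub_iff_add_le']; exact_mod_cast this
    -- scaling by `#S - #T` clears the denominator of the average in `hb_avg`
    have hscaled : ((#S : ℝ) - #T) * (#S * (w b + ∑ i ∈ T, w i) - (#T + 1) * ∑ i ∈ S, w i) ≤ 0 := by
      nlinarith [mul_le_mul_of_nonneg_left hb_avg (Nat.cast_nonneg (α := ℝ) #S),
        mul_le_mul_of_nonneg_right hT (sub_nonneg.mpr hgap)]
    push_cast
    linarith [nonpos_of_mul_nonpos_right hscaled (by linarith)]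

theorem Finset.filter_ite_mem_ne_zero {ι M : Type*} [Fintype ι] [DecidableEq ι] [Zero M]
    [DecidableEq M]
    {f : ι → M} {T : Finset ι} (hT : T ⊆ univ.filter (fun d => f d ≠ 0)) :
    univ.filter (fun d => (if d ∈ T then f d else 0) ≠ 0) = T := by
  ext d
  by_cases hd : d ∈ T
  · simpa [hd] using hT hd
  · simp [hd]

section Sigma

variable {g : ℕ → ℝ} {m n : ℕ}

theorem le_sigma {e : ℝ} (f : Fin n → ℕ) (hf : ∑ d, f d ≤ m)
    (hfg : ∑ d ∈ univ.filter (fun d => f d ≠ 0), g (f d) ≤ e⁻¹ * g 1) :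
    #(univ.filter (fun d => f d ≠ 0)) ≤ sigma g e m n := by
  refine le_csSup ⟨n, ?_⟩ ⟨f, hf, hfg, rfl⟩
  rintro k ⟨f', -, -, rfl⟩
  exact (card_filter_le _ _).trans (card_fin n).le

theorem exists_card_support_eq_sigma {e : ℝ} (he : 0 ≤ e⁻¹ * g 1) :
    ∃ f : Fin n → ℕ, ∑ d, f d ≤ m ∧
      ∑ d ∈ univ.filter (fun d => f d ≠ 0), g (f d) ≤ e⁻¹ * g 1 ∧
      #(univ.filter (fun d => f d ≠ 0)) = sigma g e m n := by
  obtain ⟨f, hf, hfg, hk⟩ := Nat.sSup_mem (s := {k : ℕ | ∃ f : Fin n → ℕ, ∑ d, f d ≤ m ∧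
      ∑ d ∈ univ.filter (fun d => f d ≠ 0), g (f d) ≤ e⁻¹ * g 1 ∧
      k = #(univ.filter (fun d => f d ≠ 0))})
    ⟨0, fun _ => 0, by simp, by simpa using he, by simp⟩
    ⟨n, by rintro k ⟨f, -, -, rfl⟩; exact (card_filter_le _ _).trans (card_fin n).le⟩
  exact ⟨f, hf, hfg, hk.symm⟩

theorem le_sigma_of_mul_le_mul (hg1 : 0 ≤ g 1) {α ε : ℝ} (hα : 0 < α) (hε : 0 < ε) {t : ℕ}
    (ht : t ≤ sigma g α m n) (htε : t * ε ≤ sigma g α m n * α) : t ≤ sigma g ε m n := by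
  obtain ⟨f, hf, hfg, hk⟩ := exists_card_support_eq_sigma (m := m) (n := n)
    (mul_nonneg (inv_nonneg.mpr hα.le) hg1)
  set S := univ.filter (fun d => f d ≠ 0)
  set k := sigma g α m n
  obtain ⟨T, hTS, hTt, hT⟩ := exists_subset_card_eq_card_mul_sum_le (fun d => g (f d)) S
    (hk ▸ ht)
  obtain rfl | htpos := Nat.eq_zero_or_pos t
  · exact Nat.zero_le _
  have hkpos : (0 : ℝ) < k := by exact_mod_cast htpos.trans_le ht
  have hgT : ∑ d ∈ T, g (f d) ≤ ε⁻¹ * g 1 := by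
    have hscale : (t : ℝ) * α⁻¹ ≤ k * ε⁻¹ := by
      simpa only [div_eq_mul_inv] using (div_le_div_iff₀ hα hε).mpr htε
    refine le_of_mul_le_mul_left ?_ hkpos
    calc (k : ℝ) * ∑ d ∈ T, g (f d) ≤ t * ∑ d ∈ S, g (f d) := by rwa [hk] at hT
      _ ≤ t * (α⁻¹ * g 1) := mul_le_mul_of_nonneg_left hfg t.cast_nonneg
      _ = t * α⁻¹ * g 1 := by ring
      _ ≤ k * ε⁻¹ * g 1 := mul_le_mul_of_nonneg_right hscale hg1
      _ = k * (ε⁻¹ * g 1) := by ring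
  have hsupp := filter_ite_mem_ne_zero hTS
  rw [← hTt, ← hsupp]
  refine le_sigma _ ?_ ?_
  · calc ∑ d, (if d ∈ T then f d else 0) = ∑ d ∈ T, f d := by
          rw [sum_ite_mem, univ_inter]
      _ ≤ ∑ d, f d := sum_le_sum_of_subset (subset_univ T)
      _ ≤ m := hf
  · rw [hsupp]
    refine (sum_congr rfl fun d hd => ?_).trans_le hgT
    rw [if_pos hd]

end Sigma

theorem stmt_1_general (g : ℕ → ℝ) (hgnn : ∀ x, 0 ≤ g x) (m n : ℕ) (α ε : ℝ) (hα : 0 < α) (hαε : α < ε) :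
    ε * (1 + (sigma g ε m n : ℝ)) ≥ α * (sigma g α m n : ℝ) := by
  have hε : 0 < ε := hα.trans hαε
  set k := sigma g α m n
  set t := ⌊k * α / ε⌋₊
  have htε : t * ε ≤ k * α :=
    (le_div_iff₀ hε).mp (Nat.floor_le (by positivity))
  have htk : t ≤ k := by
    refine Nat.floor_le_of_le ((div_le_iff₀ hε).mpr ?_)
    exact mul_le_mul_of_nonneg_left hαε.le k.cast_nonneg
  have htσ : (t : ℝ) ≤ sigma g ε m n := by
    exact_mod_cast le_sigma_of_mul_le_mul (hgnn 1) hα hε htk htε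
  calc α * k = ε * (k * α / ε) := by field_simp
    _ ≤ ε * (t + 1) := by gcongr; exact (Nat.lt_floor_add_one _).le
    _ ≤ ε * (1 + sigma g ε m n) := by rw [add_comm (t : ℝ)]; gcongr

theorem stmt_1 (g : ℕ → ℝ) (hg0 : g 0 = 0) (hgnn : ∀ x, 0 ≤ g x)
    (hgdec : ∀ x y : ℕ, 1 ≤ x → x ≤ y → g y ≤ g x)
    (m n : ℕ) (hm : 0 < m) (hn : 0 < n) (hnm : n ≤ m)
    (α ε : ℝ) (hα : 0 < α) (hαε : α < ε) :
    ε * (1 + (sigma g ε m n : ℝ)) ≥ α * (sigma g α m n : ℝ) :=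
  stmt_1_general g hgnn m n α ε hα hαε
end

section
/- Let g : ℕ → ℝ be nonnegative with g(0) = 0, let f ∈ ℤ^n be fixed, and let 0 < ε. Suppose X_1, ..., X_n are pairwise independent Bernoulli random variables where X_d has success probability p_d satisfying p_d ≥ min{1, 9·g(|f_d|)/(ε²·G)} and p_d > 0, where G = ∑_{d=1}^n g(|f_d|) > 0. Define the estimator Ĝ = ∑_{d=1}^n p_d⁻¹ X_d g(|f_d|). Then E[Ĝ] = G, Var(Ĝ) ≤ (ε·G)²/9, and P(|Ĝ − G| ≤ ε·G) ≥ 8/9. -/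
/-!
The estimator is a weighted sum of pairwise uncorrelated indicators, so its variance is the sum
of the variances of its terms, `(1 / p_d - 1) g(|f_d|)²`. The lower bound on `p_d` makes each
term at most `(ε² G / 9) g(|f_d|)`, which sums to `(ε G)² / 9`, and Chebyshev's inequality
turns this into the deviation bound.
-/

open MeasureTheory ProbabilityTheory

section Chebyshev

variable {Ω : Type*} {m : MeasurableSpace Ω} {μ : Measure Ω} [IsProbabilityMeasure μ]
  {X : Ω → ℝ}

theorem one_sub_ofReal_le_measure_abs_sub_integral_le (hX : MemLp X 2 μ) {t δ : ℝ}
    (ht : 0 < t) (hvar : Var[X; μ] ≤ δ * t ^ 2) :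
    1 - ENNReal.ofReal δ ≤ μ {ω | |X ω - μ[X]| ≤ t} := by
  have htail : μ {ω | |X ω - μ[X]| ≤ t}ᶜ ≤ ENNReal.ofReal δ :=
    calc μ {ω | |X ω - μ[X]| ≤ t}ᶜ ≤ μ {ω | t ≤ |X ω - μ[X]|} :=
          measure_mono fun ω (hω : ¬|X ω - μ[X]| ≤ t) => (not_le.mp hω).le
      _ ≤ ENNReal.ofReal (Var[X; μ] / t ^ 2) := meas_ge_le_variance_div_sq hX ht
      _ ≤ ENNReal.ofReal δ :=
          ENNReal.ofReal_le_ofReal ((div_le_iff₀ (by positivity)).mpr hvar)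
  rw [tsub_le_iff_right, ← measure_univ (μ := μ), ← Set.union_compl_self {ω | |X ω - μ[X]| ≤ t}]
  exact (measure_union_le _ _).trans (add_le_add le_rfl htail)

end Chebyshev

section Indicator

variable {Ω : Type*} {m : MeasurableSpace Ω} {μ : Measure Ω} {X : Ω → ℝ}

theorem memLp_of_forall_eq_zero_or_eq_one [IsFiniteMeasure μ] (hX : Measurable X)
    (h01 : ∀ ω, X ω = 0 ∨ X ω = 1) (q : ENNReal) : MemLp X q μ :=
  MemLp.of_bound hX.aestronglyMeasurable 1 <| .of_forall fun ω => by
    rcases h01 ω with h | h <;> simp [h]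

theorem variance_of_forall_eq_zero_or_eq_one [IsProbabilityMeasure μ] (hX : Measurable X)
    (h01 : ∀ ω, X ω = 0 ∨ X ω = 1) : Var[X; μ] = μ[X] * (1 - μ[X]) := by
  have hsq : X ^ 2 = X := funext fun ω => by rcases h01 ω with h | h <;> simp [h]
  rw [variance_eq_sub (memLp_of_forall_eq_zero_or_eq_one hX h01 2), hsq]
  ring

end Indicator

theorem variance_fun_sum_of_pairwise_covariance_eq_zero {Ω ι : Type*} {m : MeasurableSpace Ω}
    {μ : Measure Ω} [IsFiniteMeasure μ] [Fintype ι] {X : ι → Ω → ℝ}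
    (hX : ∀ i, MemLp (X i) 2 μ) (hcov : Pairwise fun i j => cov[X i, X j; μ] = 0) :
    Var[fun ω => ∑ i, X i ω; μ] = ∑ i, Var[X i; μ] := by
  rw [variance_fun_sum hX]
  refine Finset.sum_congr rfl fun i _ => ?_
  rw [Finset.sum_eq_single i (fun j _ hji => hcov hji.symm) (by simp),
    covariance_self (hX i).aemeasurable]

theorem inv_sub_one_mul_sq_le {p a c : ℝ} (hp : 0 < p) (ha : 0 ≤ a) (hc : 0 < c)
    (hmin : min 1 (a / c) ≤ p) : (p⁻¹ - 1) * a ^ 2 ≤ c * a := by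
  rcases le_or_gt 1 p with h1 | h1
  · have : p⁻¹ - 1 ≤ 0 := sub_nonpos.mpr (inv_le_one_of_one_le₀ h1)
    nlinarith [mul_nonneg hc.le ha, sq_nonneg a]
  · have hac : a ≤ c * p := by
      have := (min_le_iff.mp hmin).resolve_left (not_le.mpr h1)
      rwa [div_le_iff₀ hc, mul_comm] at this
    have hpa : p⁻¹ * a ^ 2 ≤ c * a := by
      rw [inv_mul_le_iff₀ hp]
      nlinarith
    nlinarith [sq_nonneg a]

section HorvitzThompson

variable {Ω ι : Type*} {m : MeasurableSpace Ω} {μ : Measure Ω} [Fintype ι]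
  {X : ι → Ω → ℝ} {p a : ι → ℝ}

/-- The Horvitz–Thompson (inverse-probability-weighted) estimator `Ĝ` of `∑ i, a i`. -/
noncomputable def horvitzThompson (p a : ι → ℝ) (X : ι → Ω → ℝ) (ω : Ω) : ℝ :=
  ∑ i, (p i)⁻¹ * X i ω * a i

theorem memLp_horvitzThompson (hX : ∀ i, MemLp (X i) 2 μ) :
    MemLp (horvitzThompson p a X) 2 μ :=
  memLp_finsetSum _ fun i _ => ((hX i).const_mul _).mul_const _

theorem integral_horvitzThompson (hX : ∀ i, Integrable (X i) μ) (hp : ∀ i, p i ≠ 0)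
    (hmean : ∀ i, μ[X i] = p i) : μ[horvitzThompson p a X] = ∑ i, a i := by
  unfold horvitzThompson
  rw [integral_finsetSum _ fun i _ => ((hX i).const_mul _).mul_const _]
  refine Finset.sum_congr rfl fun i _ => ?_
  rw [integral_mul_const, integral_const_mul, hmean i, inv_mul_cancel₀ (hp i), one_mul]

theorem variance_horvitzThompson [IsProbabilityMeasure μ] (hXm : ∀ i, Measurable (X i))
    (h01 : ∀ i ω, X i ω = 0 ∨ X i ω = 1) (hp : ∀ i, p i ≠ 0) (hmean : ∀ i, μ[X i] = p i)
    (hpair : Pairwise fun i j => μ[X i * X j] = p i * p j) :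
    Var[horvitzThompson p a X; μ] = ∑ i, ((p i)⁻¹ - 1) * a i ^ 2 := by
  have hX : ∀ i, MemLp (X i) 2 μ := fun i => memLp_of_forall_eq_zero_or_eq_one (hXm i) (h01 i) 2
  have hcov : Pairwise fun i j => cov[X i, X j; μ] = 0 := fun i j hij => by
    dsimp only
    rw [covariance_eq_sub (hX i) (hX j), hpair hij, hmean, hmean, sub_self]
  have hterm : ∀ i, (fun ω => (p i)⁻¹ * X i ω * a i) = fun ω => ((p i)⁻¹ * a i) * X i ω :=
    fun i => funext fun ω => by ring
  unfold horvitzThompson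
  rw [variance_fun_sum_of_pairwise_covariance_eq_zero (fun i => ?memLp) fun i j hij => ?cov]
  case memLp => exact ((hX i).const_mul _).mul_const _
  case cov =>
    dsimp only
    rw [hterm, hterm, covariance_const_mul_left, covariance_const_mul_right, hcov hij,
      mul_zero, mul_zero]
  refine Finset.sum_congr rfl fun i _ => ?_
  rw [hterm, variance_const_mul, variance_of_forall_eq_zero_or_eq_one (hXm i) (h01 i), hmean]
  field_simp [hp i]

end HorvitzThompson

theorem stmt_2_general {Ω : Type*} [MeasureSpace Ω] [IsProbabilityMeasure (ℙ : Measure Ω)]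
    (n : ℕ) (g : ℕ → ℝ) (hgnn : ∀ x, 0 ≤ g x)
    (f : Fin n → ℤ) (ε : ℝ) (hε : 0 < ε)
    (hG : 0 < ∑ d, g (f d).natAbs)
    (p : Fin n → ℝ) (hp_pos : ∀ d, 0 < p d)
    (hp : ∀ d, min 1 (9 * g (f d).natAbs / (ε ^ 2 * ∑ e, g (f e).natAbs)) ≤ p d)
    (X : Fin n → Ω → ℝ) (hmeas : ∀ d, Measurable (X d))
    (hBer : ∀ d ω, X d ω = 0 ∨ X d ω = 1)
    (hmean : ∀ d, (∫ ω, X d ω) = p d)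
    (hpairwise : ∀ d e, d ≠ e → (∫ ω, X d ω * X e ω) = p d * p e) :
    (∫ ω, ∑ d, (p d)⁻¹ * X d ω * g (f d).natAbs) = (∑ d, g (f d).natAbs) ∧
    variance (fun ω => ∑ d, (p d)⁻¹ * X d ω * g (f d).natAbs) ℙ
      ≤ (ε * ∑ d, g (f d).natAbs) ^ 2 / 9 ∧
    (8 / 9 : ENNReal) ≤
      ℙ {ω | |(∑ d, (p d)⁻¹ * X d ω * g (f d).natAbs) - ∑ d, g (f d).natAbs|
        ≤ ε * ∑ d, g (f d).natAbs} := by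
  set G := ∑ d, g (f d).natAbs
  have hX : ∀ d, MemLp (X d) 2 ℙ := fun d => memLp_of_forall_eq_zero_or_eq_one (hmeas d) (hBer d) 2
  have hp0 : ∀ d, p d ≠ 0 := fun d => (hp_pos d).ne'
  have hmean' : ℙ[horvitzThompson p (fun d => g (f d).natAbs) X] = G :=
    integral_horvitzThompson (fun d => (hX d).integrable one_le_two) hp0 hmean
  have hvar : Var[horvitzThompson p (fun d => g (f d).natAbs) X; ℙ] ≤ (ε * G) ^ 2 / 9 := by
    rw [variance_horvitzThompson hmeas hBer hp0 hmean hpairwise]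
    have hc : 0 < ε ^ 2 * G / 9 := by positivity
    calc ∑ d, ((p d)⁻¹ - 1) * g (f d).natAbs ^ 2 ≤ ∑ d, ε ^ 2 * G / 9 * g (f d).natAbs :=
          Finset.sum_le_sum fun d _ => inv_sub_one_mul_sq_le (hp_pos d) (hgnn _) hc <| by
            rw [div_div_eq_mul_div, mul_comm]; exact hp d
      _ = (ε * G) ^ 2 / 9 := by rw [← Finset.mul_sum]; ring
  refine ⟨hmean', hvar, ?_⟩
  have hcheb := one_sub_ofReal_le_measure_abs_sub_integral_le (memLp_horvitzThompson hX)
    (mul_pos hε hG) (δ := 1 / 9) (hvar.trans_eq (by ring))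
  rw [hmean'] at hcheb
  refine le_trans ?_ hcheb
  rw [ENNReal.ofReal_div_of_pos (by norm_num), ENNReal.ofReal_one, ENNReal.ofReal_ofNat,
    ENNReal.le_sub_iff_add_le_right (by simp) (ENNReal.div_le_of_le_mul (by norm_num)),
    ENNReal.div_add_div_same, ENNReal.div_le_iff (by norm_num) (by norm_num)]
  norm_num

theorem stmt_2 {Ω : Type*} [MeasureSpace Ω] [IsProbabilityMeasure (ℙ : Measure Ω)]
    (n : ℕ) (g : ℕ → ℝ) (hg0 : g 0 = 0) (hgnn : ∀ x, 0 ≤ g x)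
    (f : Fin n → ℤ) (ε : ℝ) (hε : 0 < ε)
    (hG : 0 < ∑ d, g (f d).natAbs)
    (p : Fin n → ℝ) (hp_pos : ∀ d, 0 < p d)
    (hp : ∀ d, min 1 (9 * g (f d).natAbs / (ε ^ 2 * ∑ e, g (f e).natAbs)) ≤ p d)
    (X : Fin n → Ω → ℝ) (hmeas : ∀ d, Measurable (X d))
    (hBer : ∀ d ω, X d ω = 0 ∨ X d ω = 1)
    (hmean : ∀ d, (∫ ω, X d ω) = p d)
    (hpairwise : ∀ d e, d ≠ e → (∫ ω, X d ω * X e ω) = p d * p e) :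
    (∫ ω, ∑ d, (p d)⁻¹ * X d ω * g (f d).natAbs) = (∑ d, g (f d).natAbs) ∧
    variance (fun ω => ∑ d, (p d)⁻¹ * X d ω * g (f d).natAbs) ℙ
      ≤ (ε * ∑ d, g (f d).natAbs) ^ 2 / 9 ∧
    (8 / 9 : ENNReal) ≤
      ℙ {ω | |(∑ d, (p d)⁻¹ * X d ω * g (f d).natAbs) - ∑ d, g (f d).natAbs|
        ≤ ε * ∑ d, g (f d).natAbs} :=
  stmt_2_general n g hgnn f ε hε hG p hp_pos hp X hmeas hBer hmean hpairwise
end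

section
/- Let (Y_{i,d})_{i ∈ [ℓ], d ∈ [n]} be random variables such that for each fixed i the family (Y_{i,d})_{d ∈ [n]} is pairwise independent Bernoulli(1/2), and the ℓ families are mutually independent across i. Define X_{i,d} = ∏_{j=1}^{i} Y_{j,d}. Then for each fixed i ∈ [ℓ], the family (X_{i,d})_{d ∈ [n]} is pairwise independent, and P(X_{i,d} = 1) = 2^{-i} for all d. -/
/-!
`X_{i,d} = ∏_{j ≤ i} Y_{j,d}` equals `1` exactly when `Y_{j,d} = 1` for every `j ≤ i`, so
independence across the rows gives `P(X_{i,d} = 1) = 2^{-i}`, and, with pairwise independence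
inside each row, `P(X_{i,d} = X_{i,e} = 1) = 4^{-i} = P(X_{i,d} = 1) P(X_{i,e} = 1)`.
For `{0,1}`-valued variables this single factorisation is already independence: each event
`{X = a}` is one of `∅`, `{X = 1}`, `{X = 1}ᶜ`.
-/

open MeasureTheory ProbabilityTheory MeasurableSpace
open scoped ENNReal

theorem Finset.prod_eq_zero_or_eq_one {ι : Type*} {s : Finset ι} {f : ι → ℕ}
    (hf : ∀ j ∈ s, f j = 0 ∨ f j = 1) : ∏ j ∈ s, f j = 0 ∨ ∏ j ∈ s, f j = 1 :=
  Finset.prod_induction f (fun x => x = 0 ∨ x = 1)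
    (by rintro _ _ (rfl | rfl) (rfl | rfl) <;> simp) (Or.inr rfl) hf

lemma measurableSet_generateFrom_eq_one {Ω : Type*} {X : Ω → ℕ}
    (hX : ∀ ω, X ω = 0 ∨ X ω = 1) (a : ℕ) :
    MeasurableSet[generateFrom {{ω | X ω = 1}}] {ω | X ω = a} := by
  rcases a with _ | _ | a
  · have : {ω | X ω = 0} = {ω | X ω = 1}ᶜ := by
      ext ω; rcases hX ω with h | h <;> simp [h]
    exact this ▸ measurableSet_compl _ _ (measurableSet_generateFrom (Set.mem_singleton _))
  · exact measurableSet_generateFrom (Set.mem_singleton _)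
  · have : {ω | X ω = a + 2} = ∅ := by
      ext ω; rcases hX ω with h | h <;> simp [h]
    exact this ▸ measurableSet_empty _

lemma measure_eq_and_eq_of_zero_one_valued {Ω : Type*} [MeasurableSpace Ω] {μ : Measure Ω}
    [IsProbabilityMeasure μ] {X Y : Ω → ℕ} (hX : Measurable X) (hY : Measurable Y)
    (hX01 : ∀ ω, X ω = 0 ∨ X ω = 1) (hY01 : ∀ ω, Y ω = 0 ∨ Y ω = 1)
    (h11 : μ {ω | X ω = 1 ∧ Y ω = 1} = μ {ω | X ω = 1} * μ {ω | Y ω = 1}) (a b : ℕ) :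
    μ {ω | X ω = a ∧ Y ω = b} = μ {ω | X ω = a} * μ {ω | Y ω = b} :=
  have hindep : IndepSet {ω | X ω = 1} {ω | Y ω = 1} μ :=
    (indepSet_iff_measure_inter_eq_mul (hX (measurableSet_singleton 1))
      (hY (measurableSet_singleton 1)) μ).2 h11
  (Indep_iff _ _ μ).1 hindep _ _ (measurableSet_generateFrom_eq_one hX01 a)
    (measurableSet_generateFrom_eq_one hY01 b)

lemma ProbabilityTheory.iIndepFun.measure_forall_mem_Icc_eq_pow {Ω β : Type*}
    [MeasurableSpace Ω] [MeasurableSpace β] {μ : Measure Ω} {ℓ i : ℕ} {Z : ℕ → Ω → β}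
    (hZ : iIndepFun (fun k : Fin ℓ => Z (k + 1)) μ) (hi : i ≤ ℓ) {S : Set β}
    (hS : MeasurableSet S) {p : ℝ≥0∞} (hp : ∀ j ∈ Finset.Icc 1 i, μ (Z j ⁻¹' S) = p) :
    μ {ω | ∀ j ∈ Finset.Icc 1 i, Z j ω ∈ S} = p ^ i := by
  set rows : Finset (Fin ℓ) := {k | k < i}
  have hset : {ω | ∀ j ∈ Finset.Icc 1 i, Z j ω ∈ S} = ⋂ k ∈ rows, Z (k + 1) ⁻¹' S := by
    ext ω
    simp only [Set.mem_ofPred_eq, Set.mem_iInter, Set.mem_preimage, Finset.mem_Icc, rows,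
      Finset.mem_filter_univ]
    refine ⟨fun h k hk => h _ ⟨by omega, hk⟩, fun h j hj => ?_⟩
    exact Nat.sub_add_cancel hj.1 ▸ h ⟨j - 1, by omega⟩ (show j - 1 < i by omega)
  have hrow (k : Fin ℓ) (hk : k ∈ rows) : μ (Z (k + 1) ⁻¹' S) = p := by
    rw [Finset.mem_filter_univ] at hk
    exact hp _ (Finset.mem_Icc.2 ⟨by omega, hk⟩)
  rw [hset, hZ.measure_inter_preimage_eq_mul _ fun _ _ => hS, Finset.prod_congr rfl hrow,
    Finset.prod_const, Fin.card_filter_val_lt, min_eq_right hi]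

theorem stmt_7 {Ω : Type*} [MeasureSpace Ω] [IsProbabilityMeasure (ℙ : Measure Ω)]
    (ℓ n : ℕ) (Y : ℕ → ℕ → Ω → ℕ)
    (hY01 : ∀ i d ω, Y i d ω = 0 ∨ Y i d ω = 1)
    (hmeas : ∀ i d, Measurable (Y i d))
    (hhalf : ∀ i ∈ Finset.Icc 1 ℓ, ∀ d : Fin n,
      ℙ {ω | Y i d ω = 1} = 1 / 2)
    (hpair : ∀ i ∈ Finset.Icc 1 ℓ, ∀ d e : Fin n, d ≠ e → ∀ a b : ℕ,
      ℙ {ω | Y i d ω = a ∧ Y i e ω = b}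
        = ℙ {ω | Y i d ω = a} * ℙ {ω | Y i e ω = b})
    (hindep : iIndepFun
      (fun (i : Fin ℓ) (ω : Ω) => fun d : Fin n => Y ((i : ℕ) + 1) d ω) ℙ) :
    ∀ i ∈ Finset.Icc 1 ℓ,
      (∀ d : Fin n,
        ℙ {ω | (∏ j ∈ Finset.Icc 1 i, Y j d ω) = 1} = (1 / 2 : ENNReal) ^ i) ∧
      (∀ d e : Fin n, d ≠ e → ∀ a b : ℕ,
        ℙ {ω | (∏ j ∈ Finset.Icc 1 i, Y j d ω) = a ∧
               (∏ j ∈ Finset.Icc 1 i, Y j e ω) = b}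
          = ℙ {ω | (∏ j ∈ Finset.Icc 1 i, Y j d ω) = a}
            * ℙ {ω | (∏ j ∈ Finset.Icc 1 i, Y j e ω) = b}) := by
  intro i hi
  have hiℓ : i ≤ ℓ := (Finset.mem_Icc.1 hi).2
  have hsub : Finset.Icc 1 i ⊆ Finset.Icc 1 ℓ := Finset.Icc_subset_Icc_right hiℓ
  have hcoord (d : Fin n) : MeasurableSet {v : Fin n → ℕ | v d = 1} :=
    measurable_pi_apply d (measurableSet_singleton 1)
  have hone (d : Fin n) :
      ℙ {ω | (∏ j ∈ Finset.Icc 1 i, Y j d ω) = 1} = (1 / 2 : ℝ≥0∞) ^ i := by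
    simp_rw [Finset.prod_eq_one_iff]
    exact hindep.measure_forall_mem_Icc_eq_pow (Z := fun j ω (d : Fin n) => Y j d ω) hiℓ
      (hcoord d) fun j hj => hhalf j (hsub hj) d
  refine ⟨hone, fun d e hde => measure_eq_and_eq_of_zero_one_valued
    (Finset.measurable_prod _ fun j _ => hmeas j d)
    (Finset.measurable_prod _ fun j _ => hmeas j e)
    (fun ω => Finset.prod_eq_zero_or_eq_one fun j _ => hY01 j d ω)
    (fun ω => Finset.prod_eq_zero_or_eq_one fun j _ => hY01 j e ω) ?_⟩
  rw [hone d, hone e, ← mul_pow]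
  simp_rw [Finset.prod_eq_one_iff, ← forall₂_and]
  exact hindep.measure_forall_mem_Icc_eq_pow (Z := fun j ω (d : Fin n) => Y j d ω) hiℓ
    ((hcoord d).inter (hcoord e)) fun j hj =>
      (hpair j (hsub hj) d e hde 1 1).trans (by rw [hhalf j (hsub hj) d, hhalf j (hsub hj) e])
end

section
/- Let g : ℕ → ℝ be nonnegative and nonincreasing on positive integers with g(0)=0, let m, n be positive integers with n ≤ m, and ε > 0. Define σ = max{|supp(f)| : f ∈ ℕ^n, ∑f_d ≤ m, ∑_{d∈supp(f)} g(f_d) ≤ ε⁻¹g(1)}. Then there exists an integer y ≥ 1 and an integer s' ≥ ⌊σ/2⌋ such that the vector f' with s' coordinates equal to y and the rest 0 satisfies s'·y ≤ m and s'·g(y) ≤ ε⁻¹·g(1); i.e., the optimization restricted to vectors with all nonzero coordinates equal loses at most a factor 2. -/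
theorem stmt_11 (g : ℕ → ℝ) (hg0 : g 0 = 0) (hgnn : ∀ x, 0 ≤ g x)
    (hgdec : ∀ x y : ℕ, 1 ≤ x → x ≤ y → g y ≤ g x)
    (m n : ℕ) (hm : 0 < m) (hn : 0 < n) (hnm : n ≤ m)
    (ε : ℝ) (hε : 0 < ε) :
    ∃ y s' : ℕ, 1 ≤ y ∧ sigma g ε m n / 2 ≤ s' ∧ s' ≤ n ∧
      s' * y ≤ m ∧ (s' : ℝ) * g y ≤ ε⁻¹ * g 1 := by
  have hrhs : (0:ℝ) ≤ ε⁻¹ * g 1 := mul_nonneg (by positivity) (hgnn 1)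
  set T : Set ℕ := {k : ℕ | ∃ f : Fin n → ℕ, (∑ d, f d) ≤ m ∧
    (∑ d ∈ Finset.univ.filter (fun d => f d ≠ 0), g (f d)) ≤ ε⁻¹ * g 1 ∧
    k = (Finset.univ.filter (fun d => f d ≠ 0)).card} with hT
  have hTne : T.Nonempty := by
    refine ⟨0, fun _ => 0, by simp, ?_, by simp⟩
    simpa using hrhs
  have hTbdd : BddAbove T := by
    refine ⟨n, fun k hk => ?_⟩
    obtain ⟨f, -, -, hk⟩ := hk
    rw [hk]
    exact le_trans (Finset.card_filter_le _ _) (by simp)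
  have hmem : sigma g ε m n ∈ T := Nat.sSup_mem hTne hTbdd
  obtain ⟨f, hsum, hgsum, hcard⟩ := hmem
  set σ := sigma g ε m n with hσ
  set S := Finset.univ.filter (fun d : Fin n => f d ≠ 0) with hS
  have hσn : σ ≤ n := le_trans (hcard ▸ Finset.card_filter_le _ _) (by simp)
  rcases Nat.eq_zero_or_pos σ with hσ0 | hσpos
  · exact ⟨1, 0, le_refl 1, by omega, by omega, by simp, by simpa using hrhs⟩
  -- σ ≥ 1 case
  set k := (σ + 1) / 2 with hk
  have hkσ : k ≤ σ := by omega
  have hk1 : 1 ≤ k := by omega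
  -- each f d ≤ m
  have hfm : ∀ d, f d ≤ m := fun d =>
    le_trans (Finset.single_le_sum (fun i _ => Nat.zero_le (f i)) (Finset.mem_univ d)) hsum
  set Y : Set ℕ := {v : ℕ | k ≤ (S.filter (fun i => v ≤ f i)).card} with hY
  have hYne : (1 : ℕ) ∈ Y := by
    have : S.filter (fun i => 1 ≤ f i) = S := by
      apply Finset.filter_true_of_mem
      intro i hi
      simp only [hS, Finset.mem_filter] at hi
      omega
    simp only [hY, Set.mem_setOf_eq, this, ← hcard]
    exact hkσ
  have hYbdd : BddAbove Y := by
    refine ⟨m, fun v hv => ?_⟩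
    by_contra hvm
    push_neg at hvm
    simp only [hY, Set.mem_setOf_eq] at hv
    have : S.filter (fun i => v ≤ f i) = ∅ := by
      apply Finset.filter_false_of_mem
      intro i _
      have := hfm i
      omega
    rw [this] at hv
    simp at hv
    omega
  set y := sSup Y with hy
  have hymem : y ∈ Y := Nat.sSup_mem ⟨1, hYne⟩ hYbdd
  have hy1 : 1 ≤ y := le_csSup hYbdd hYne
  have hynot : y + 1 ∉ Y := fun h => by
    have := le_csSup hYbdd h
    omega
  simp only [hY, Set.mem_setOf_eq] at hymem hynot
  push_neg at hynot
  -- B = small coordinates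
  set B := S.filter (fun i => f i ≤ y) with hB
  have hBcard : k ≤ B.card := by
    have hsplit : (S.filter (fun i => y + 1 ≤ f i)).card + B.card = S.card := by
      rw [hB]
      have := Finset.card_filter_add_card_filter_not
        (s := S) (p := fun i => y + 1 ≤ f i)
      simp only [not_le, Nat.lt_succ_iff] at this
      exact this
    have hScard : S.card = σ := hcard.symm
    omega
  refine ⟨y, k, hy1, by omega, le_trans hkσ hσn, ?_, ?_⟩
  · -- k * y ≤ m
    calc k * y ≤ ∑ i ∈ S.filter (fun i => y ≤ f i), f i := by
          have := Finset.card_nsmul_le_sum (S.filter (fun i => y ≤ f i)) f y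
            (fun i hi => (Finset.mem_filter.mp hi).2)
          calc k * y ≤ (S.filter (fun i => y ≤ f i)).card * y :=
                Nat.mul_le_mul_right y hymem
            _ ≤ _ := by simpa [smul_eq_mul] using this
      _ ≤ ∑ d, f d := Finset.sum_le_sum_of_subset
          (le_trans (Finset.filter_subset _ _) (Finset.filter_subset _ _))
      _ ≤ m := hsum
  · -- k * g y ≤ ε⁻¹ * g 1
    have h1 : (k : ℝ) * g y ≤ (B.card : ℝ) * g y :=
      mul_le_mul_of_nonneg_right (by exact_mod_cast hBcard) (hgnn y)
    have h2 : (B.card : ℝ) * g y ≤ ∑ i ∈ B, g (f i) := by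
      have := Finset.card_nsmul_le_sum B (fun i => g (f i)) (g y)
        (fun i hi => by
          have hi' := Finset.mem_filter.mp hi
          have hi'' := Finset.mem_filter.mp hi'.1
          exact hgdec (f i) y (by omega) hi'.2)
      simpa [nsmul_eq_mul] using this
    have h3 : ∑ i ∈ B, g (f i) ≤ ∑ i ∈ S, g (f i) :=
      Finset.sum_le_sum_of_subset_of_nonneg (Finset.filter_subset _ _)
        (fun i _ _ => hgnn (f i))
    linarith [hgsum]
end
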